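/- arXiv:1604.05927 — 4 statements merged into one kernel-verified Lean document; each statement's English description precedes it below -/
import Mathlib

section
/- Suppose the data set X^n in ℝ^p (with n > p ≥ 1) is in general position. Then, regardless of the dimension of the Tukey median region, the maximum Tukey depth satisfies λ* ≤ ⌊(n − p + 2)/2⌋ / n. -/
open scoped RealInnerProductSpace

/-- Number of data points in the closed halfspace `{y : ⟪u, y⟫ ≤ ⟪u, x⟫}`. -/
noncomputable def depthCount {p n : ℕ} (X : Fin n → EuclideanSpace ℝ (Fin p))
    (u x : EuclideanSpace ℝ (Fin p)) : ℕ :=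
  Nat.card {i : Fin n // ⟪u, X i⟫ ≤ ⟪u, x⟫}

/-- Tukey (halfspace) depth of `x` with respect to the data set `X`:
`(1/n) · inf` over nonzero `u` of the number of data points `i` with `⟪u, X i⟫ ≤ ⟪u, x⟫`. -/
noncomputable def tukeyDepth {p n : ℕ} (X : Fin n → EuclideanSpace ℝ (Fin p))
    (x : EuclideanSpace ℝ (Fin p)) : ℝ :=
  (sInf {k : ℕ | ∃ u : EuclideanSpace ℝ (Fin p), u ≠ 0 ∧ k = depthCount X u x} : ℕ) / n

/-- Maximum Tukey depth `λ* = sup_x D(x)`. -/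
noncomputable def maxDepth {p n : ℕ} (X : Fin n → EuclideanSpace ℝ (Fin p)) : ℝ :=
  ⨆ x, tukeyDepth X x

/-- Tukey median region `M = {x : D(x) = λ*}`. -/
def medianRegion {p n : ℕ} (X : Fin n → EuclideanSpace ℝ (Fin p)) :
    Set (EuclideanSpace ℝ (Fin p)) :=
  {x | tukeyDepth X x = maxDepth X}

/-- The data set is in general position: every affine hyperplane
(set of the form `{y : ⟪u, y⟫ = c}` with `u ≠ 0`) contains at most `p` of the points. -/
def InGeneralPosition {p n : ℕ} (X : Fin n → EuclideanSpace ℝ (Fin p)) : Prop :=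
  ∀ u : EuclideanSpace ℝ (Fin p), u ≠ 0 → ∀ c : ℝ,
    Nat.card {i : Fin n // ⟪u, X i⟫ = c} ≤ p

/-!
Shift `x` to the origin. The data points span the space (otherwise a hyperplane through `x` would
hold all `n > p` of them), so `p - 1` of them are linearly independent and lie on a hyperplane
`ker f` through `x`, which by general position holds at most one further data point. Orient `f` so
that the open side `{f < 0}` holds at most half of the points off `ker f`, then tilt `f` to
`f + δ g` with `g > 0` at the `p - 1` chosen points: for small `δ > 0` the closed halfspace
`{f + δ g ≤ 0}` only gains the points of `ker f` where `g ≤ 0`, of which there is at most one.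
-/

open Finset Module Filter Topology

lemma span_range_eq_top_of_card_eq_zero_le {K E ι : Type*} [Field K] [DecidableEq K]
    [AddCommGroup E] [Module K E] [Fintype ι] (w : ι → E) {d : ℕ} (hι : d < Fintype.card ι)
    (hw : ∀ f : Dual K E, f ≠ 0 → #{i | f (w i) = 0} ≤ d) :
    Submodule.span K (Set.range w) = ⊤ := by
  by_contra h
  obtain ⟨f, hf, hker⟩ :=
    (Submodule.span K (Set.range w)).exists_le_ker_of_lt_top (lt_top_iff_ne_top.2 h)
  have hall : #{i | f (w i) = 0} = Fintype.card ι := by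
    rw [filter_true_of_mem fun i _ => LinearMap.mem_ker.1 (hker (Submodule.subset_span ⟨i, rfl⟩)),
      card_univ]
  have := hw f hf
  omega

lemma exists_dual_ne_zero_finrank_sub_one_le_card {K E ι : Type*} [Field K] [LinearOrder K]
    [IsStrictOrderedRing K] [AddCommGroup E] [Module K E] [Fintype ι] (w : ι → E)
    (hw : Submodule.span K (Set.range w) = ⊤) (hE : 0 < finrank K E) :
    ∃ f g : Dual K E, f ≠ 0 ∧ finrank K E - 1 ≤ #{i | f (w i) = 0 ∧ 0 < g (w i)} := by
  classical
  obtain ⟨κ, a, ha, hspan, hli⟩ := exists_linearIndependent' K w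
  have : Finite κ := .of_injective a ha
  cases nonempty_fintype κ
  let b : Basis κ K E := .mk hli (by rw [hspan, hw])
  have hb : ∀ k, b k = w (a k) := fun k => Basis.mk_apply ..
  have hcard : finrank K E = Fintype.card κ := finrank_eq_card_basis b
  obtain ⟨k₀⟩ : Nonempty κ := Fintype.card_pos_iff.1 (hcard ▸ hE)
  refine ⟨b.coord k₀, ∑ k, b.coord k, fun h => ?_, ?_⟩
  · simpa using congr($h (b k₀))
  calc finrank K E - 1 = #((univ.erase k₀).image a) := by
        rw [card_image_of_injective _ ha, card_erase_of_mem (mem_univ _), card_univ, hcard]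
    _ ≤ _ := card_le_card fun i hi => by
      obtain ⟨k, hk, rfl⟩ := mem_image.1 hi
      simp [← hb, Finsupp.single_apply, (ne_of_mem_erase hk).symm]

lemma exists_ne_zero_two_mul_card_mul_neg_add_card_eq_zero_le {ι : Type*} [Fintype ι]
    (a : ι → ℝ) : ∃ ε : ℝ, ε ≠ 0 ∧ 2 * #{i | ε * a i < 0} + #{i | a i = 0} ≤ Fintype.card ι := by
  classical
  have hsplit : #{i | a i < 0} + #{i | a i = 0} + #{i | 0 < a i} = Fintype.card ι := by
    rw [← card_union_of_disjoint, ← card_union_of_disjoint, ← card_univ]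
    · congr; ext i; simpa [or_assoc] using lt_trichotomy (a i) 0
    all_goals grind [disjoint_left]
  rcases le_total #{i | a i < 0} #{i | 0 < a i} with h | h
  · exact ⟨1, one_ne_zero, by simp only [one_mul]; omega⟩
  · exact ⟨-1, by norm_num, by simp only [neg_one_mul, neg_lt_zero]; omega⟩

lemma exists_pos_card_add_mul_nonpos_le {ι : Type*} [Fintype ι] (a b : ι → ℝ) :
    ∃ δ > 0, #{i | a i + δ * b i ≤ 0} ≤ #{i | a i < 0} + #{i | a i = 0 ∧ b i ≤ 0} := by
  classical
  have hδ : ∀ᶠ δ in 𝓝[>] (0 : ℝ), ∀ i, a i + δ * b i ≤ 0 → a i < 0 ∨ (a i = 0 ∧ b i ≤ 0) := by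
    refine eventually_all.2 fun i => ?_
    rcases lt_trichotomy (a i) 0 with hi | hi | hi
    · exact .of_forall fun _ _ => .inl hi
    · filter_upwards [self_mem_nhdsWithin] with δ (hδ : 0 < δ) h
      exact .inr ⟨hi, nonpos_of_mul_nonpos_right (by linarith) hδ⟩
    · have hc : Continuous fun δ : ℝ => a i + δ * b i := by fun_prop
      filter_upwards [nhdsWithin_le_nhds ((hc.tendsto' 0 (a i) (by simp)).eventually
        (lt_mem_nhds hi))] with δ h h'
      exact absurd h' h.not_ge
  obtain ⟨δ, hδ, hpos⟩ := (hδ.and self_mem_nhdsWithin).exists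
  refine ⟨δ, hpos, (card_le_card fun i => ?_).trans (card_union_le _ _)⟩
  simpa [mem_union] using hδ i

theorem exists_dual_ne_zero_card_nonpos_le {E ι : Type*} [AddCommGroup E] [Module ℝ E]
    [Fintype ι] (w : ι → E) (hE : 0 < finrank ℝ E) (hι : finrank ℝ E < Fintype.card ι)
    (hw : ∀ f : Dual ℝ E, f ≠ 0 → #{i | f (w i) = 0} ≤ finrank ℝ E) :
    ∃ f : Dual ℝ E, f ≠ 0 ∧ #{i | f (w i) ≤ 0} ≤ (Fintype.card ι - finrank ℝ E + 2) / 2 := by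
  classical
  obtain ⟨f, g, hf, hpos⟩ :=
    exists_dual_ne_zero_finrank_sub_one_le_card w (span_range_eq_top_of_card_eq_zero_le w hι hw) hE
  obtain ⟨ε, hε, hhalf⟩ := exists_ne_zero_two_mul_card_mul_neg_add_card_eq_zero_le (f ∘ w)
  obtain ⟨δ, -, htilt⟩ := exists_pos_card_add_mul_nonpos_le (fun i => ε * f (w i)) (g ∘ w)
  simp only [Function.comp_apply, mul_eq_zero, hε, false_or] at hhalf htilt
  have hsplit : #{i | f (w i) = 0 ∧ g (w i) ≤ 0} + #{i | f (w i) = 0 ∧ 0 < g (w i)} =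
      #{i | f (w i) = 0} := by
    rw [← card_union_of_disjoint (disjoint_filter.2 fun i _ h h' => h.2.not_gt h'.2)]
    congr 1; ext i; simp only [mem_union, mem_filter, mem_univ, true_and]; grind
  have hzero := hw f hf
  let F := ε • f + δ • g
  have hcount : 2 * #{i | F (w i) ≤ 0} ≤ Fintype.card ι - finrank ℝ E + 2 := by
    simp only [F, LinearMap.add_apply, LinearMap.smul_apply, smul_eq_mul]; omega
  refine ⟨F, fun hF => ?_, by omega⟩
  have hall : #{i | F (w i) ≤ 0} = Fintype.card ι := by simp [hF]
  omega

lemma exists_ne_zero_inner_eq {E : Type*} [NormedAddCommGroup E] [InnerProductSpace ℝ E]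
    [FiniteDimensional ℝ E] {f : Dual ℝ E} (hf : f ≠ 0) :
    ∃ u : E, u ≠ 0 ∧ ∀ y, ⟪u, y⟫ = f y := by
  refine ⟨(InnerProductSpace.toDual ℝ E).symm (LinearMap.toContinuousLinearMap f), ?_, fun y => ?_⟩
  · simpa using hf
  · simp [InnerProductSpace.toDual_symm_apply]

lemma InGeneralPosition.card_dual_sub_eq_zero_le {p n : ℕ} {X : Fin n → EuclideanSpace ℝ (Fin p)}
    (hgp : InGeneralPosition X) (x : EuclideanSpace ℝ (Fin p))
    {f : Dual ℝ (EuclideanSpace ℝ (Fin p))} (hf : f ≠ 0) : #{i | f (X i - x) = 0} ≤ p := by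
  obtain ⟨u, hu0, hu⟩ := exists_ne_zero_inner_eq hf
  simpa [← hu, inner_sub_right, sub_eq_zero, Nat.card_eq_fintype_card, Fintype.card_subtype]
    using hgp u hu0 ⟪u, x⟫

/-- If `Xⁿ` is in general position then `λ* ≤ ⌊(n - p + 2)/2⌋ / n`. -/
theorem maxDepth_le {p n : ℕ} (hp : 1 ≤ p) (hn : p < n)
    (X : Fin n → EuclideanSpace ℝ (Fin p))
    (hgp : InGeneralPosition X) :
    maxDepth X ≤ ((n - p + 2) / 2 : ℕ) / (n : ℝ) := by
  refine ciSup_le fun x => ?_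
  obtain ⟨f, hf, hcount⟩ := exists_dual_ne_zero_card_nonpos_le (fun i => X i - x)
    (by simpa [Nat.one_le_iff_ne_zero, pos_iff_ne_zero] using hp) (by simpa using hn)
    (by simpa using fun f => hgp.card_dual_sub_eq_zero_le x (f := f))
  obtain ⟨u, hu0, hu⟩ := exists_ne_zero_inner_eq hf
  rw [tukeyDepth, div_le_div_iff_of_pos_right (Nat.cast_pos.2 (by omega)), Nat.cast_le]
  calc sInf _ ≤ depthCount X u x := Nat.sInf_le (Set.mem_ofPred.2 ⟨u, hu0, rfl⟩)
    _ ≤ (n - p + 2) / 2 := by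
      simpa [depthCount, ← hu, inner_sub_right, Nat.card_eq_fintype_card, Fintype.card_subtype]
        using hcount
end

section
/- Suppose the data set X^n in ℝ^p (with n > p ≥ 1) is in general position. Then no sample point X_l (l ∈ {1,…,n}) belongs to the topological interior of the Tukey median region M. -/
open scoped RealInnerProductSpace

/-
Let `u` be a direction realising the depth of the sample point `X l`. The closed halfspace
`{y : ⟪u, y⟫ ≤ ⟪u, X l⟫}` contains `X l` on its boundary, so pushing the point to `X l - t • u`
with `t > 0` loses `X l` from that halfspace and the depth drops strictly. Thus every
neighbourhood of `X l` contains points of smaller depth, while on the interior of the median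
region the depth is constant.
-/

open scoped Topology

open Filter

section TukeyDepth

variable {p n : ℕ} (X : Fin n → EuclideanSpace ℝ (Fin p))

lemma depthCount_eq_ncard (u x : EuclideanSpace ℝ (Fin p)) :
    depthCount X u x = {i : Fin n | ⟪u, X i⟫ ≤ ⟪u, x⟫}.ncard :=
  Nat.card_coe_set_eq _

lemma depthCount_lt_depthCount_sample {u x : EuclideanSpace ℝ (Fin p)} {l : Fin n}
    (h : ⟪u, x⟫ < ⟪u, X l⟫) : depthCount X u x < depthCount X u (X l) := by
  rw [depthCount_eq_ncard, depthCount_eq_ncard]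
  refine Set.ncard_lt_ncard ⟨fun i hi => le_trans hi h.le, fun hsub => ?_⟩ (Set.toFinite _)
  exact (hsub (le_refl ⟪u, X l⟫)).not_gt h

lemma tukeyDepth_le_depthCount_div {u : EuclideanSpace ℝ (Fin p)} (hu : u ≠ 0)
    (x : EuclideanSpace ℝ (Fin p)) : tukeyDepth X x ≤ depthCount X u x / n :=
  div_le_div_of_nonneg_right (Nat.cast_le.mpr (Nat.sInf_le ⟨u, hu, rfl⟩)) n.cast_nonneg

lemma exists_ne_zero_tukeyDepth_eq (hp : 0 < p) (x : EuclideanSpace ℝ (Fin p)) :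
    ∃ u, u ≠ 0 ∧ tukeyDepth X x = depthCount X u x / n := by
  have : Nontrivial (EuclideanSpace ℝ (Fin p)) :=
    Module.nontrivial_of_finrank_pos (by rwa [finrank_euclideanSpace_fin])
  obtain ⟨v, hv⟩ := exists_ne (0 : EuclideanSpace ℝ (Fin p))
  obtain ⟨u, hu, hmin⟩ := Nat.sInf_mem (⟨_, v, hv, rfl⟩ :
    {k : ℕ | ∃ u : EuclideanSpace ℝ (Fin p), u ≠ 0 ∧ k = depthCount X u x}.Nonempty)
  exact ⟨u, hu, by rw [tukeyDepth, hmin]⟩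

lemma exists_forall_pos_tukeyDepth_sub_smul_lt (hp : 0 < p) (l : Fin n) :
    ∃ u, ∀ t : ℝ, 0 < t → tukeyDepth X (X l - t • u) < tukeyDepth X (X l) := by
  obtain ⟨u, hu, hmin⟩ := exists_ne_zero_tukeyDepth_eq X hp (X l)
  refine ⟨u, fun t ht => ?_⟩
  have hinner : ⟪u, X l - t • u⟫ < ⟪u, X l⟫ := by
    rw [inner_sub_right, real_inner_smul_right, real_inner_self_eq_norm_sq]
    have : 0 < t * ‖u‖ ^ 2 := by positivity
    linarith
  have hn : (0 : ℝ) < n := Nat.cast_pos.mpr l.pos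
  calc tukeyDepth X (X l - t • u) ≤ depthCount X u (X l - t • u) / n :=
        tukeyDepth_le_depthCount_div X hu _
    _ < depthCount X u (X l) / n := by
        gcongr
        exact depthCount_lt_depthCount_sample X hinner
    _ = tukeyDepth X (X l) := hmin.symm

end TukeyDepth

theorem sample_point_not_mem_interior_medianRegion_general {p n : ℕ} (hp : 1 ≤ p)
    (X : Fin n → EuclideanSpace ℝ (Fin p)) :
    ∀ l : Fin n, X l ∉ interior (medianRegion X) := by
  intro l hl
  obtain ⟨u, hlt⟩ := exists_forall_pos_tukeyDepth_sub_smul_lt X hp l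
  have hpath : Tendsto (fun t : ℝ => X l - t • u) (𝓝[>] 0) (𝓝 (X l)) :=
    ((continuous_const.sub (continuous_id.smul continuous_const)).tendsto' 0 (X l)
      (by simp)).mono_left nhdsWithin_le_nhds
  obtain ⟨t, htM, ht⟩ :=
    ((hpath.eventually (mem_interior_iff_mem_nhds.mp hl)).and self_mem_nhdsWithin).exists
  exact (hlt t ht).ne (htM.trans (interior_subset hl).symm)

/-- No sample point of a data set in general position belongs to the topological
interior of the Tukey median region. -/
theorem sample_point_not_mem_interior_medianRegion {p n : ℕ} (hp : 1 ≤ p) (hn : p < n)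
    (X : Fin n → EuclideanSpace ℝ (Fin p))
    (hgp : InGeneralPosition X) :
    ∀ l : Fin n, X l ∉ interior (medianRegion X) :=
  sample_point_not_mem_interior_medianRegion_general hp X
end

section
/- Suppose the data set X^n in ℝ^p (with n > p ≥ 2) is in general position and the Tukey median region M has affine dimension strictly less than p. Then M is contained in an affine hyperplane passing through exactly p of the sample points: there exist a nonzero u ∈ ℝ^p and q ∈ ℝ such that M ⊆ {x ∈ ℝ^p : ⟨u, x⟩ = q} and #{i ∈ {1,…,n} : ⟨u, X_i⟩ = q} = p. -/
open scoped RealInnerProductSpace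

/-!
Let `N` be the largest depth count, so that `M = {x | ∀ u ≠ 0, N ≤ #{i | ⟪u, Xᵢ⟫ ≤ ⟪u, x⟫}}`;
in particular `M` is convex. If `x ∉ M`, some closed halfspace containing `x` holds fewer than
`N` data points. Rotating it, first about `x` and then about data points, without letting a data
point into its interior, we may assume that its boundary is spanned by data points; `M` then lies
in the opposite closed halfspace. Up to scaling there are finitely many hyperplanes spanned by
data points, so `M` is squeezed between the open and the closed intersection of finitely many
halfspaces. A convex set squeezed that way either has nonempty interior or lies in one of the
bounding hyperplanes, and in general position such a hyperplane carries exactly `p` data points.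
-/

open Module Set

section Hyperplanes

variable {E : Type*} [NormedAddCommGroup E] [InnerProductSpace ℝ E]

-- A pair `f : E × ℝ` stands for the closed halfspace `f.2 ≤ ⟪f.1, ·⟫`.
theorem Convex.exists_mem_forall_lt {M : Set E} (hM : Convex ℝ M) (hne : M.Nonempty)
    {F : Set (E × ℝ)} (hF : F.Finite) (hle : ∀ f ∈ F, ∀ x ∈ M, f.2 ≤ ⟪f.1, x⟫)
    (hlt : ∀ f ∈ F, ∃ x ∈ M, f.2 < ⟪f.1, x⟫) : ∃ x ∈ M, ∀ f ∈ F, f.2 < ⟪f.1, x⟫ := by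
  induction F, hF using Set.Finite.induction_on with
  | empty => exact hne.imp fun x hx => ⟨hx, by simp⟩
  | @insert f F _ _ ih =>
    obtain ⟨x, hxM, hx⟩ := ih (fun g hg => hle g (mem_insert_of_mem f hg))
      (fun g hg => hlt g (mem_insert_of_mem f hg))
    obtain ⟨y, hyM, hy⟩ := hlt f (mem_insert f F)
    refine ⟨(1 / 2 : ℝ) • x + (1 / 2 : ℝ) • y, hM hxM hyM (by norm_num) (by norm_num)
      (by norm_num), ?_⟩
    rintro g (rfl | hg) <;> simp only [inner_add_right, real_inner_smul_right]
    · linarith [hle g (mem_insert g F) x hxM]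
    · linarith [hx g hg, hle g (mem_insert_of_mem f hg) y hyM]

theorem Convex.exists_subset_hyperplane {M : Set E} (hM : Convex ℝ M) (hne : M.Nonempty)
    {F : Set (E × ℝ)} (hF : F.Finite) (hle : ∀ f ∈ F, ∀ x ∈ M, f.2 ≤ ⟪f.1, x⟫)
    (hlt : ∀ y, (∀ f ∈ F, f.2 < ⟪f.1, y⟫) → y ∈ M) (hspan : affineSpan ℝ M ≠ ⊤) :
    ∃ f ∈ F, ∀ x ∈ M, ⟪f.1, x⟫ = f.2 := by
  by_contra! h
  obtain ⟨x, -, hx⟩ := hM.exists_mem_forall_lt hne hF hle fun f hf =>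
    (h f hf).imp fun x hx => ⟨hx.1, (hle f hf x hx.1).lt_of_ne' hx.2⟩
  have hU : IsOpen {y | ∀ f ∈ F, f.2 < ⟪f.1, y⟫} := by
    simpa only [ofPred_forall] using hF.isOpen_biInter fun f _ =>
      isOpen_lt continuous_const (continuous_const.inner continuous_id)
  exact hspan (eq_top_iff.2 ((hU.affineSpan_eq_top ⟨x, hx⟩).ge.trans (affineSpan_mono ℝ hlt)))

theorem vectorSpan_le_orthogonal_of_subset {s : Set E} {u : E} {c : ℝ}
    (hs : s ⊆ {y | ⟪u, y⟫ = c}) : vectorSpan ℝ s ≤ (ℝ ∙ u)ᗮ := by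
  rw [vectorSpan_def, Submodule.span_le]
  rintro _ ⟨y, hy, z, hz, rfl⟩
  rw [SetLike.mem_coe, Submodule.mem_orthogonal_singleton_iff_inner_right]
  show ⟪u, y - z⟫ = 0
  rw [inner_sub_right, hs hy, hs hz, sub_self]

theorem vectorSpan_lt_of_inner_ne {s t : Set E} {u y z : E} {c : ℝ} (hst : s ⊆ t)
    (hs : s ⊆ {w | ⟪u, w⟫ = c}) (hz : z ∈ s) (hy : y ∈ t) (hyc : ⟪u, y⟫ ≠ c) :
    vectorSpan ℝ s < vectorSpan ℝ t := by
  refine lt_of_le_of_ne (vectorSpan_mono ℝ hst) fun h => hyc ?_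
  have hyz := vectorSpan_le_orthogonal_of_subset hs (h ▸ vsub_mem_vectorSpan ℝ hy (hst hz))
  rwa [Submodule.mem_orthogonal_singleton_iff_inner_right, vsub_eq_sub, inner_sub_right, hs hz,
    sub_eq_zero] at hyz

theorem exists_mem_orthogonal_inner_neg {K : Submodule ℝ E} [K.HasOrthogonalProjection] {w : E}
    (hw : w ∉ K) : ∃ g ∈ Kᗮ, ⟪g, w⟫ < 0 := by
  by_contra! h
  refine hw ?_
  rw [← K.orthogonal_orthogonal, Submodule.mem_orthogonal']
  intro g hg
  have hneg := h (-g) (Kᗮ.neg_mem hg)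
  rw [inner_neg_left] at hneg
  linarith [h g hg, real_inner_comm g w]

/-- Turn the hyperplane `⟪u, ·⟫ = ⟪u, y₀⟫` about its intersection with `⟪g, ·⟫ = ⟪g, y₀⟫`
until it meets a new point of `P`. -/
theorem exists_pivot {P : Set E} (hP : P.Finite) {u g y₀ : E} (hg : g ≠ 0) (hgu : ⟪g, u⟫ = 0)
    (hgP : ∀ y ∈ P, ⟪u, y⟫ = ⟪u, y₀⟫ → ⟪g, y⟫ = ⟪g, y₀⟫)
    (hoff : ∃ y ∈ P, ⟪u, y⟫ ≠ ⟪u, y₀⟫) :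
    ∃ u', u' ≠ 0 ∧ (∀ v, ⟪u, v⟫ = 0 → ⟪u', v⟫ = ⟪g, v⟫) ∧
      (∀ y ∈ P, ⟪u', y⟫ < ⟪u', y₀⟫ → ⟪u, y⟫ < ⟪u, y₀⟫) ∧
      (∀ y ∈ P, ⟪u, y⟫ = ⟪u, y₀⟫ → ⟪u', y⟫ = ⟪u', y₀⟫) ∧
      ∃ y ∈ P, ⟪u, y⟫ ≠ ⟪u, y₀⟫ ∧ ⟪u', y⟫ = ⟪u', y₀⟫ := by
  set a : E → ℝ := fun y => ⟪u, y⟫ - ⟪u, y₀⟫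
  set b : E → ℝ := fun y => ⟪g, y⟫ - ⟪g, y₀⟫
  have hb : ∀ y ∈ P, a y = 0 → b y = 0 := fun y hy hay =>
    sub_eq_zero.2 (hgP y hy (sub_eq_zero.1 hay))
  -- the new normal is `s • u + g`, with `s` the largest slope `-b y / a y` over `P`
  obtain ⟨y₁, ⟨hy₁P, hy₁⟩, hmax⟩ := exists_max_image {y ∈ P | a y ≠ 0} (fun y => -b y / a y)
    (hP.subset (sep_subset _ _)) (hoff.imp fun y hy => ⟨hy.1, sub_ne_zero.2 hy.2⟩)
  set s := -b y₁ / a y₁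
  have key : ∀ y, ⟪s • u + g, y⟫ - ⟪s • u + g, y₀⟫ = s * a y + b y := fun y => by
    simp only [a, b, inner_add_left, real_inner_smul_left]; ring
  refine ⟨s • u + g, ?_, fun v hv => ?_, fun y hy hlt => ?_, fun y hy hay => ?_,
    y₁, hy₁P, sub_ne_zero.1 hy₁, ?_⟩
  · intro h
    have hgg : ⟪g, s • u + g⟫ = 0 := by rw [h, inner_zero_right]
    rw [inner_add_right, real_inner_smul_right, hgu, mul_zero, zero_add] at hgg
    exact hg (inner_self_eq_zero.1 hgg)
  · rw [inner_add_left, real_inner_smul_left, hv, mul_zero, zero_add]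
  · have hneg : s * a y + b y < 0 := by rw [← key]; linarith
    rcases lt_trichotomy (a y) 0 with hay | hay | hay
    · exact sub_neg.1 hay
    · rw [hay, hb y hy hay] at hneg; simp at hneg
    · have := (div_le_iff₀ hay).1 (hmax y ⟨hy, hay.ne'⟩)
      linarith
  · have hay' : a y = 0 := sub_eq_zero.2 hay
    rw [← sub_eq_zero, key, hay', hb y hy hay', mul_zero, add_zero]
  · rw [← sub_eq_zero, key, div_mul_cancel₀ _ hy₁, neg_add_cancel]

/-- For `u ≠ 0`: the points of `P` on the hyperplane `⟪u, ·⟫ = c` affinely span it. -/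
def IsHyperplaneSpannedBy (P : Set E) (u : E) (c : ℝ) : Prop :=
  finrank ℝ (vectorSpan ℝ (P ∩ {y | ⟪u, y⟫ = c})) = finrank ℝ E - 1

theorem isHyperplaneSpannedBy_smul {P : Set E} {u : E} {c r : ℝ} (hr : r ≠ 0) :
    IsHyperplaneSpannedBy P (r • u) (r * c) ↔ IsHyperplaneSpannedBy P u c := by
  have : {y | ⟪r • u, y⟫ = r * c} = {y | ⟪u, y⟫ = c} := by
    ext y
    simp only [mem_ofPred_eq, real_inner_smul_left, mul_right_inj' hr]
  rw [IsHyperplaneSpannedBy, IsHyperplaneSpannedBy, this]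

variable [FiniteDimensional ℝ E]

theorem finrank_orthogonal_span_singleton_eq {u : E} (hu : u ≠ 0) :
    finrank ℝ (ℝ ∙ u)ᗮ = finrank ℝ E - 1 := by
  have := (ℝ ∙ u).finrank_add_finrank_orthogonal
  rw [finrank_span_singleton hu] at this
  omega

theorem finrank_vectorSpan_le_of_subset {s : Set E} {u : E} {c : ℝ} (hu : u ≠ 0)
    (hs : s ⊆ {y | ⟪u, y⟫ = c}) : finrank ℝ (vectorSpan ℝ s) ≤ finrank ℝ E - 1 :=
  finrank_orthogonal_span_singleton_eq hu ▸ Submodule.finrank_mono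
    (vectorSpan_le_orthogonal_of_subset hs)

theorem exists_mem_orthogonal_ne_zero {K : Submodule ℝ E} (hK : finrank ℝ K < finrank ℝ E) :
    ∃ g ∈ Kᗮ, g ≠ 0 := by
  have := K.finrank_add_finrank_orthogonal
  obtain ⟨⟨g, hg⟩, hg0⟩ := finrank_pos_iff_exists_ne_zero.1 (show 0 < finrank ℝ Kᗮ by omega)
  exact ⟨g, hg, fun h => hg0 (Subtype.ext h)⟩

theorem finrank_span_singleton_sup_lt {u : E} {V : Submodule ℝ E}
    (hV : finrank ℝ V < finrank ℝ E - 1) : finrank ℝ ↥((ℝ ∙ u) ⊔ V) < finrank ℝ E := by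
  have := Submodule.finrank_add_le_finrank_add_finrank (ℝ ∙ u) V
  have := finrank_span_le_card (R := ℝ) ({u} : Set E)
  simp only [toFinset_singleton, Finset.card_singleton] at this
  omega

variable {P : Set E}

theorem exists_finrank_vectorSpan_insert_eq (hP : P.Finite)
    (hPH : ∀ u ≠ (0 : E), ∀ c, ∃ y ∈ P, ⟪u, y⟫ ≠ c) (x : E) {u : E} (hu : u ≠ 0) :
    ∃ u', u' ≠ 0 ∧ (∀ y ∈ P, ⟪u', y⟫ < ⟪u', x⟫ → ⟪u, y⟫ < ⟪u, x⟫) ∧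
      finrank ℝ (vectorSpan ℝ (insert x (P ∩ {y | ⟪u', y⟫ = ⟪u', x⟫}))) = finrank ℝ E - 1 := by
  induction hm : finrank ℝ E - 1 -
      finrank ℝ (vectorSpan ℝ (insert x (P ∩ {y | ⟪u, y⟫ = ⟪u, x⟫})))
      using Nat.strong_induction_on generalizing u with
  | _ m ih =>
  have hS : insert x (P ∩ {y | ⟪u, y⟫ = ⟪u, x⟫}) ⊆ {y | ⟪u, y⟫ = ⟪u, x⟫} :=
    insert_subset rfl inter_subset_right
  rcases (finrank_vectorSpan_le_of_subset hu hS).eq_or_lt with hD | hD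
  · exact ⟨u, hu, fun _ _ h => h, hD⟩
  obtain ⟨g, hgK, hg⟩ := exists_mem_orthogonal_ne_zero (finrank_span_singleton_sup_lt (u := u) hD)
  obtain ⟨u', hu', -, hbelow, hkeep, y, hyP, hyu, hyu'⟩ := exists_pivot hP hg
    (Submodule.inner_left_of_mem_orthogonal (Submodule.mem_sup_left
      (Submodule.mem_span_singleton_self u)) hgK)
    (fun y hy hyu => sub_eq_zero.1 <| by
      rw [← inner_sub_right]
      exact Submodule.inner_left_of_mem_orthogonal (Submodule.mem_sup_right
        (vsub_mem_vectorSpan ℝ (mem_insert_of_mem x (mem_inter hy hyu)) (mem_insert x _))) hgK)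
    (hPH u hu _)
  have hlt : vectorSpan ℝ (insert x (P ∩ {y | ⟪u, y⟫ = ⟪u, x⟫})) <
      vectorSpan ℝ (insert x (P ∩ {y | ⟪u', y⟫ = ⟪u', x⟫})) := vectorSpan_lt_of_inner_ne
    (insert_subset_insert fun y hy => mem_inter hy.1 (hkeep y hy.1 hy.2)) hS (mem_insert x _)
    (mem_insert_of_mem x (mem_inter hyP hyu')) hyu
  have := Submodule.finrank_lt_finrank_of_lt hlt
  have hS' : insert x (P ∩ {y | ⟪u', y⟫ = ⟪u', x⟫}) ⊆ {y | ⟪u', y⟫ = ⟪u', x⟫} :=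
    insert_subset rfl inter_subset_right
  have := finrank_vectorSpan_le_of_subset hu' hS'
  obtain ⟨u'', hu'', hbelow', hrank⟩ := ih _ (by omega) hu' rfl
  exact ⟨u'', hu'', fun y hy h => hbelow y hy (hbelow' y hy h), hrank⟩

theorem exists_isHyperplaneSpannedBy_of_finrank_insert (hd : 2 ≤ finrank ℝ E) (hP : P.Finite)
    (hPH : ∀ u ≠ (0 : E), ∀ c, ∃ y ∈ P, ⟪u, y⟫ ≠ c) {x u : E} (hu : u ≠ 0)
    (hD : finrank ℝ (vectorSpan ℝ (insert x (P ∩ {y | ⟪u, y⟫ = ⟪u, x⟫}))) = finrank ℝ E - 1) :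
    ∃ u' c, u' ≠ 0 ∧ ⟪u', x⟫ ≤ c ∧ (∀ y ∈ P, ⟪u', y⟫ < c → ⟪u, y⟫ < ⟪u, x⟫) ∧
      IsHyperplaneSpannedBy P u' c := by
  have hS : P ∩ {y | ⟪u, y⟫ = ⟪u, x⟫} ⊆ {y | ⟪u, y⟫ = ⟪u, x⟫} := inter_subset_right
  rcases (finrank_vectorSpan_le_of_subset hu hS).eq_or_lt with hV | hV
  · exact ⟨u, ⟪u, x⟫, hu, le_rfl, fun _ _ h => h, hV⟩
  obtain ⟨y₀, hy₀P, hy₀⟩ : (P ∩ {y | ⟪u, y⟫ = ⟪u, x⟫}).Nonempty := by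
    rw [nonempty_iff_ne_empty]
    rintro hempty
    rw [hempty, insert_empty_eq, vectorSpan_singleton, finrank_bot] at hD
    exact Nat.sub_ne_zero_of_lt hd hD.symm
  -- `x` and the points of `P` on the hyperplane already span it
  have hxK : x - y₀ ∉ (ℝ ∙ u) ⊔ vectorSpan ℝ (P ∩ {y | ⟪u, y⟫ = ⟪u, x⟫}) := by
    intro hxK
    have hDK : vectorSpan ℝ (insert x (P ∩ {y | ⟪u, y⟫ = ⟪u, x⟫})) ≤
        (ℝ ∙ u) ⊔ vectorSpan ℝ (P ∩ {y | ⟪u, y⟫ = ⟪u, x⟫}) := by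
      rw [vectorSpan_eq_span_vsub_set_right ℝ (mem_insert_of_mem x (mem_inter hy₀P hy₀)),
        Submodule.span_le, image_insert_eq]
      rintro _ (rfl | ⟨y, hy, rfl⟩)
      · exact hxK
      · exact Submodule.mem_sup_right (vsub_mem_vectorSpan ℝ hy (mem_inter hy₀P hy₀))
    have hDu : vectorSpan ℝ (insert x (P ∩ {y | ⟪u, y⟫ = ⟪u, x⟫})) = (ℝ ∙ u)ᗮ :=
      Submodule.eq_of_le_of_finrank_eq (vectorSpan_le_orthogonal_of_subset (insert_subset rfl hS))
        (by rw [hD, finrank_orthogonal_span_singleton_eq hu])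
    have htop := (Submodule.sup_orthogonal_of_hasOrthogonalProjection (K := ℝ ∙ u)).ge.trans
      (sup_le le_sup_left (hDu ▸ hDK))
    have := Submodule.finrank_mono htop
    rw [finrank_top] at this
    exact (finrank_span_singleton_sup_lt hV).not_ge this
  obtain ⟨g, hgK, hgx⟩ := exists_mem_orthogonal_inner_neg hxK
  obtain ⟨u', hu', hu'g, hbelow, hkeep, y, hyP, hyu, hyu'⟩ := exists_pivot hP
    (fun h => by simp [h] at hgx)
    (Submodule.inner_left_of_mem_orthogonal (Submodule.mem_sup_left
      (Submodule.mem_span_singleton_self u)) hgK)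
    (fun y hy hyu => sub_eq_zero.1 <| by
      rw [← inner_sub_right]
      exact Submodule.inner_left_of_mem_orthogonal (Submodule.mem_sup_right
        (vsub_mem_vectorSpan ℝ (mem_inter hy (hyu.trans hy₀)) (mem_inter hy₀P hy₀))) hgK)
    (hPH u hu ⟪u, y₀⟫)
  refine ⟨u', ⟪u', y₀⟫, hu', ?_, fun y hy h => hy₀ ▸ hbelow y hy h, ?_⟩
  · have hx : ⟪u', x - y₀⟫ = ⟪g, x - y₀⟫ := hu'g _ (by rw [inner_sub_right, hy₀, sub_self])
    rw [inner_sub_right] at hx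
    linarith
  · have hS' : P ∩ {y | ⟪u', y⟫ = ⟪u', y₀⟫} ⊆ {y | ⟪u', y⟫ = ⟪u', y₀⟫} := inter_subset_right
    have hlt : vectorSpan ℝ (P ∩ {y | ⟪u, y⟫ = ⟪u, x⟫}) <
        vectorSpan ℝ (P ∩ {y | ⟪u', y⟫ = ⟪u', y₀⟫}) :=
      vectorSpan_lt_of_inner_ne (fun y hy => mem_inter hy.1 (hkeep y hy.1 (hy.2.trans hy₀.symm)))
        hS ⟨hy₀P, hy₀⟩ (mem_inter hyP hyu') (hy₀ ▸ hyu)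
    have := Submodule.finrank_lt_finrank_of_lt hlt
    have := finrank_vectorSpan_le_of_subset hu' hS'
    have := finrank_vectorSpan_insert_le_set ℝ (P ∩ {y | ⟪u, y⟫ = ⟪u, x⟫}) x
    unfold IsHyperplaneSpannedBy
    omega

theorem exists_isHyperplaneSpannedBy (hd : 2 ≤ finrank ℝ E) (hP : P.Finite)
    (hPH : ∀ u ≠ (0 : E), ∀ c, ∃ y ∈ P, ⟪u, y⟫ ≠ c) (x : E) {u : E} (hu : u ≠ 0) :
    ∃ u' c, u' ≠ 0 ∧ ⟪u', x⟫ ≤ c ∧ (∀ y ∈ P, ⟪u', y⟫ < c → ⟪u, y⟫ < ⟪u, x⟫) ∧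
      IsHyperplaneSpannedBy P u' c := by
  obtain ⟨u₁, hu₁, hbelow₁, hD⟩ := exists_finrank_vectorSpan_insert_eq hP hPH x hu
  obtain ⟨u', c, hu', hxc, hbelow, hspan⟩ :=
    exists_isHyperplaneSpannedBy_of_finrank_insert hd hP hPH hu₁ hD
  exact ⟨u', c, hu', hxc, fun y hy h => hbelow₁ y hy (hbelow y hy h), hspan⟩

theorem exists_finite_isHyperplaneSpannedBy (hd : 2 ≤ finrank ℝ E) (hP : P.Finite) :
    ∃ G : Set (E × ℝ), G.Finite ∧ ∀ u c, u ≠ 0 → IsHyperplaneSpannedBy P u c →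
      ∃ f ∈ G, ∃ r : ℝ, 0 < r ∧ u = r • f.1 ∧ c = r * f.2 := by
  have hnormal : ∀ T : Set E, ∃ w : E, finrank ℝ (vectorSpan ℝ T) = finrank ℝ E - 1 →
      w ∈ (vectorSpan ℝ T)ᗮ ∧ w ≠ 0 := fun T => by
    by_cases hT : finrank ℝ (vectorSpan ℝ T) = finrank ℝ E - 1
    · obtain ⟨w, hw, hw0⟩ := exists_mem_orthogonal_ne_zero (K := vectorSpan ℝ T) (by omega)
      exact ⟨w, fun _ => ⟨hw, hw0⟩⟩
    · exact ⟨0, fun h => absurd h hT⟩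
  choose w hw using hnormal
  refine ⟨(fun t : Set E × E × ℝ => (t.2.2 • w t.1, t.2.2 * ⟪w t.1, t.2.1⟫)) ''
    ({T | T ⊆ P} ×ˢ P ×ˢ {1, -1}), (hP.finite_subsets.prod (hP.prod (toFinite _))).image _, ?_⟩
  intro u c hu hspan
  set T := P ∩ {y | ⟪u, y⟫ = c}
  replace hspan : finrank ℝ (vectorSpan ℝ T) = finrank ℝ E - 1 := hspan
  obtain ⟨hwT, hw0⟩ := hw T hspan
  obtain ⟨y, hyP, hyc⟩ : T.Nonempty := by
    rw [nonempty_iff_ne_empty]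
    rintro hempty
    rw [hempty, vectorSpan_empty, finrank_bot] at hspan
    exact Nat.sub_ne_zero_of_lt hd hspan.symm
  have huT : u ∈ (vectorSpan ℝ T)ᗮ := (Submodule.mem_orthogonal' _ _).2 fun v hv =>
    Submodule.mem_orthogonal_singleton_iff_inner_right.1
      (vectorSpan_le_orthogonal_of_subset inter_subset_right hv)
  have h1 : finrank ℝ (vectorSpan ℝ T)ᗮ = 1 := by
    have := (vectorSpan ℝ T).finrank_add_finrank_orthogonal
    omega
  obtain ⟨r, hr⟩ := (finrank_eq_one_iff_of_nonzero' (⟨w T, hwT⟩ : (vectorSpan ℝ T)ᗮ)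
    (by simpa using hw0)).1 h1 ⟨u, huT⟩
  have hur : u = r • w T := congrArg Subtype.val hr.symm
  have hcr : c = r * ⟪w T, y⟫ := by rw [← hyc, hur, real_inner_smul_left]
  rcases lt_or_gt_of_ne (show r ≠ 0 by rintro rfl; simp [hur] at hu) with hr0 | hr0
  · exact ⟨_, ⟨(T, y, -1), ⟨inter_subset_left, hyP, by simp⟩, rfl⟩, -r, by linarith,
      by simp [hur], by simp [hcr]⟩
  · exact ⟨_, ⟨(T, y, 1), ⟨inter_subset_left, hyP, by simp⟩, rfl⟩, r, hr0, by simp [hur],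
      by simp [hcr]⟩

end Hyperplanes

section Tukey

variable {p n : ℕ} {X : Fin n → EuclideanSpace ℝ (Fin p)}

theorem depthCount_le_depthCount {u v x y : EuclideanSpace ℝ (Fin p)}
    (h : ∀ i, ⟪u, X i⟫ ≤ ⟪u, x⟫ → ⟪v, X i⟫ ≤ ⟪v, y⟫) : depthCount X u x ≤ depthCount X v y :=
  Nat.card_mono (toFinite _) h

theorem convex_setOf_forall_le_depthCount (X : Fin n → EuclideanSpace ℝ (Fin p)) (N : ℕ) :
    Convex ℝ {x | ∀ u, u ≠ 0 → N ≤ depthCount X u x} := by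
  simp only [ofPred_forall]
  refine convex_iInter fun u => convex_iInter fun _ => ?_
  intro x hx y hy a b ha hb hab
  have hz : ⟪u, a • x + b • y⟫ = a * ⟪u, x⟫ + b * ⟪u, y⟫ := by
    rw [inner_add_right, real_inner_smul_right, real_inner_smul_right]
  rcases le_total ⟪u, x⟫ ⟪u, y⟫ with hxy | hxy
  · exact hx.trans (depthCount_le_depthCount fun i hi =>
      hi.trans (by nlinarith [mul_nonneg hb (sub_nonneg.2 hxy), congrArg (· * ⟪u, x⟫) hab]))
  · exact hy.trans (depthCount_le_depthCount fun i hi =>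
      hi.trans (by nlinarith [mul_nonneg ha (sub_nonneg.2 hxy), congrArg (· * ⟪u, y⟫) hab]))

theorem exists_medianRegion_eq (hp : 0 < p) (hn : 0 < n) (X : Fin n → EuclideanSpace ℝ (Fin p)) :
    ∃ N : ℕ, (medianRegion X).Nonempty ∧
      medianRegion X = {x | ∀ u, u ≠ 0 → N ≤ depthCount X u x} := by
  have : Nonempty (Fin p) := ⟨⟨0, hp⟩⟩
  obtain ⟨u₀, hu₀⟩ := exists_ne (0 : EuclideanSpace ℝ (Fin p))
  let ν : EuclideanSpace ℝ (Fin p) → ℕ := fun x =>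
    sInf {k | ∃ u, u ≠ 0 ∧ k = depthCount X u x}
  have hν_le : ∀ x u, u ≠ 0 → ν x ≤ depthCount X u x := fun x u hu =>
    Nat.sInf_le (s := {k | ∃ u, u ≠ 0 ∧ k = depthCount X u x}) ⟨u, hu, rfl⟩
  have hν : ∀ N x, N ≤ ν x ↔ ∀ u, u ≠ 0 → N ≤ depthCount X u x := fun N x =>
    ⟨fun h u hu => h.trans (hν_le x u hu), fun h => le_csInf ⟨_, u₀, hu₀, rfl⟩
      fun _ ⟨u, hu, hk⟩ => hk ▸ h u hu⟩
  have hνn : ∀ x, ν x ≤ n := fun x =>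
    (hν_le x u₀ hu₀).trans ((Finite.card_subtype_le _).trans (Nat.card_fin n).le)
  obtain ⟨_, ⟨x₀, rfl⟩, hx₀⟩ := exists_max_image (range ν) id
    ((finite_Iic n).subset (range_subset_iff.2 hνn)) (range_nonempty ν)
  have hdepth : ∀ x, tukeyDepth X x ≤ tukeyDepth X x₀ := fun x =>
    div_le_div_of_nonneg_right (Nat.cast_le.2 (hx₀ _ ⟨x, rfl⟩)) n.cast_nonneg
  have hmax : maxDepth X = tukeyDepth X x₀ :=
    le_antisymm (ciSup_le hdepth) (le_ciSup ⟨_, forall_mem_range.2 hdepth⟩ x₀)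
  refine ⟨ν x₀, ⟨x₀, hmax.symm⟩, ext fun x => ?_⟩
  rw [mem_ofPred_eq, ← hν]
  change tukeyDepth X x = maxDepth X ↔ _
  rw [hmax, tukeyDepth, tukeyDepth, div_left_inj' (by positivity), Nat.cast_inj]
  exact ⟨ge_of_eq, (hx₀ _ ⟨x, rfl⟩).antisymm⟩

theorem InGeneralPosition.exists_inner_ne (hgp : InGeneralPosition X) (hn : p < n)
    {u : EuclideanSpace ℝ (Fin p)} (hu : u ≠ 0) (c : ℝ) : ∃ y ∈ range X, ⟪u, y⟫ ≠ c := by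
  by_contra! h
  have := hgp u hu c
  rw [Nat.card_congr (Equiv.subtypeUnivEquiv fun i => h _ (mem_range_self i)),
    Nat.card_fin] at this
  omega

theorem InGeneralPosition.card_eq_of_isHyperplaneSpannedBy (hgp : InGeneralPosition X)
    (hp : 2 ≤ p) {u : EuclideanSpace ℝ (Fin p)} {c : ℝ} (hu : u ≠ 0)
    (h : IsHyperplaneSpannedBy (range X) u c) : Nat.card {i // ⟪u, X i⟫ = c} = p := by
  classical
  refine le_antisymm (hgp u hu c) ?_
  rw [IsHyperplaneSpannedBy, ← image_preimage_eq_range_inter, image_eq_range,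
    finrank_euclideanSpace_fin] at h
  have : Nonempty (X ⁻¹' {y | ⟪u, y⟫ = c}) := by
    by_contra hempty
    rw [not_nonempty_iff] at hempty
    rw [range_eq_empty, vectorSpan_empty, finrank_bot] at h
    omega
  have := finrank_vectorSpan_range_add_one_le ℝ fun i : X ⁻¹' {y | ⟪u, y⟫ = c} => X i
  rw [h, Fintype.card_eq_nat_card] at this
  change p - 1 + 1 ≤ Nat.card {i // ⟪u, X i⟫ = c} at this
  omega

theorem exists_isHyperplaneSpannedBy_of_notMem_medianRegion (hgp : InGeneralPosition X)
    (hp : 2 ≤ p) (hn : p < n) {N : ℕ}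
    (hM : medianRegion X = {x | ∀ u, u ≠ 0 → N ≤ depthCount X u x})
    {y : EuclideanSpace ℝ (Fin p)} (hy : y ∉ medianRegion X) :
    ∃ u c, u ≠ 0 ∧ ⟪u, y⟫ ≤ c ∧ IsHyperplaneSpannedBy (range X) u c ∧
      ∀ x ∈ medianRegion X, c ≤ ⟪u, x⟫ := by
  rw [hM] at hy ⊢
  simp only [mem_ofPred_eq, not_forall, not_le] at hy
  obtain ⟨u, hu, hyu⟩ := hy
  obtain ⟨u', c, hu', hyc, hbelow, hspan⟩ := exists_isHyperplaneSpannedBy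
    (by rwa [finrank_euclideanSpace_fin]) (finite_range X) (fun v hv => hgp.exists_inner_ne hn hv)
    y hu
  refine ⟨u', c, hu', hyc, hspan, fun x hx => not_lt.1 fun hxc => (hx u' hu').not_gt ?_⟩
  exact hyu.trans_le' (depthCount_le_depthCount fun i hi =>
    (hbelow _ (mem_range_self i) (hi.trans_lt hxc)).le)

end Tukey

/-- If `Xⁿ` is in general position and the median region has affine dimension `< p`,
then the median region is contained in an affine hyperplane passing through exactly `p`
of the sample points. -/
theorem medianRegion_subset_hyperplane_of_lowDim {p n : ℕ} (hp : 2 ≤ p) (hn : p < n)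
    (X : Fin n → EuclideanSpace ℝ (Fin p))
    (hgp : InGeneralPosition X)
    (hdim : Module.finrank ℝ (affineSpan ℝ (medianRegion X)).direction < p) :
    ∃ u : EuclideanSpace ℝ (Fin p), u ≠ 0 ∧ ∃ q : ℝ,
      medianRegion X ⊆ {x : EuclideanSpace ℝ (Fin p) | ⟪u, x⟫ = q} ∧
      Nat.card {i : Fin n // ⟪u, X i⟫ = q} = p := by
  obtain ⟨N, hne, hM⟩ := exists_medianRegion_eq (by omega) (by omega) X
  obtain ⟨G, hG, hGP⟩ := exists_finite_isHyperplaneSpannedBy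
    (by rwa [finrank_euclideanSpace_fin]) (finite_range X)
  let F := {f ∈ G | f.1 ≠ 0 ∧ IsHyperplaneSpannedBy (range X) f.1 f.2 ∧
    ∀ x ∈ medianRegion X, f.2 ≤ ⟪f.1, x⟫}
  have hspan : affineSpan ℝ (medianRegion X) ≠ ⊤ := fun h => by
    rw [h, AffineSubspace.direction_top, finrank_top, finrank_euclideanSpace_fin] at hdim
    exact hdim.false
  have hF : ∀ y, (∀ f ∈ F, f.2 < ⟪f.1, y⟫) → y ∈ medianRegion X := fun y hy => by
    by_contra hyM
    obtain ⟨u, c, hu, hyc, hspan', hMc⟩ :=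
      exists_isHyperplaneSpannedBy_of_notMem_medianRegion hgp hp hn hM hyM
    obtain ⟨f, hfG, r, hr, rfl, rfl⟩ := hGP u c hu hspan'
    simp only [real_inner_smul_left, mul_le_mul_iff_right₀ hr] at hyc hMc
    exact (hy f ⟨hfG, right_ne_zero_of_smul hu, (isHyperplaneSpannedBy_smul hr.ne').1 hspan',
      hMc⟩).not_ge hyc
  obtain ⟨f, ⟨-, hf0, hfspan, -⟩, hfM⟩ := (hM ▸ convex_setOf_forall_le_depthCount X N :
    Convex ℝ (medianRegion X)).exists_subset_hyperplane hne (hG.subset (sep_subset _ _))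
      (fun f hf => hf.2.2.2) hF hspan
  exact ⟨f.1, hf0, f.2, hfM, hgp.card_eq_of_isHyperplaneSpannedBy hp hf0 hfspan⟩
end

section
/- For any finite data set X^n = (X_1, …, X_n) in ℝ^p with n ≥ 1, the Tukey median region M = {x ∈ ℝ^p : D(x) = λ*} is a nonempty, convex, and compact subset of ℝ^p; in particular the supremum defining λ* is attained. -/
open scoped RealInnerProductSpace

/-!
The depth only takes the finitely many values `k / n`, so its supremum is attained. Writing
`n · D(x)` as the least number of data points in a closed halfspace `{⟪u, ·⟫ ≤ ⟪u, x⟫}`, `u ≠ 0`,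
the median region is a superlevel set `{x | m ≤ n · D(x)}`, i.e. the intersection over `u` of the
superlevel sets of the halfspace counts. Such a count is monotone in `⟪u, x⟫` and upper
semicontinuous in `x`, so these sets are convex and closed. Every data point has depth at least
`1 / n`, so `m ≥ 1`; a point farther from the origin than all the data has no data point in the
halfspace of direction `-x`, so the region is bounded.
-/

section TukeyDepth

variable {p n : ℕ} (X : Fin n → EuclideanSpace ℝ (Fin p))

-- For `p = 0` there is no direction `u ≠ 0`, and this is `sInf ∅ = 0`.
noncomputable def minDepthCount (x : EuclideanSpace ℝ (Fin p)) : ℕ :=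
  sInf {k : ℕ | ∃ u : EuclideanSpace ℝ (Fin p), u ≠ 0 ∧ k = depthCount X u x}

theorem tukeyDepth_eq_minDepthCount_div (x : EuclideanSpace ℝ (Fin p)) :
    tukeyDepth X x = minDepthCount X x / n :=
  rfl

theorem depthCount_le (u x : EuclideanSpace ℝ (Fin p)) : depthCount X u x ≤ n :=
  (Finite.card_subtype_le _).trans_eq (Nat.card_fin n)

theorem minDepthCount_le (x : EuclideanSpace ℝ (Fin p)) : minDepthCount X x ≤ n := by
  rcases Set.eq_empty_or_nonempty
    {k : ℕ | ∃ u : EuclideanSpace ℝ (Fin p), u ≠ 0 ∧ k = depthCount X u x} with h | h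
  · simp [minDepthCount, h]
  · obtain ⟨u, -, hu⟩ := Nat.sInf_mem h
    exact hu.trans_le (depthCount_le X u x)

theorem minDepthCount_le_depthCount {u : EuclideanSpace ℝ (Fin p)} (hu : u ≠ 0)
    (x : EuclideanSpace ℝ (Fin p)) : minDepthCount X x ≤ depthCount X u x :=
  Nat.sInf_le ⟨u, hu, rfl⟩

theorem le_minDepthCount_iff [Nontrivial (EuclideanSpace ℝ (Fin p))] {m : ℕ}
    {x : EuclideanSpace ℝ (Fin p)} :
    m ≤ minDepthCount X x ↔ ∀ u, u ≠ 0 → m ≤ depthCount X u x := by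
  refine ⟨fun h u hu => h.trans (minDepthCount_le_depthCount X hu x), fun h => ?_⟩
  obtain ⟨u, hu⟩ := exists_ne (0 : EuclideanSpace ℝ (Fin p))
  exact le_csInf ⟨_, u, hu, rfl⟩ (by rintro _ ⟨v, hv, rfl⟩; exact h v hv)

theorem finite_range_tukeyDepth : (Set.range (tukeyDepth X)).Finite :=
  ((Set.finite_Iic n).image fun k : ℕ => (k : ℝ) / n).subset <| by
    rintro _ ⟨x, rfl⟩
    exact ⟨_, minDepthCount_le X x, rfl⟩

theorem tukeyDepth_le_maxDepth (x : EuclideanSpace ℝ (Fin p)) : tukeyDepth X x ≤ maxDepth X :=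
  le_ciSup (finite_range_tukeyDepth X).bddAbove x

theorem exists_tukeyDepth_eq_maxDepth :
    ∃ x : EuclideanSpace ℝ (Fin p), tukeyDepth X x = maxDepth X :=
  (Set.range_nonempty _).csSup_mem (finite_range_tukeyDepth X)

theorem tukeyDepth_le_tukeyDepth_iff (hn : 0 < n) {x y : EuclideanSpace ℝ (Fin p)} :
    tukeyDepth X x ≤ tukeyDepth X y ↔ minDepthCount X x ≤ minDepthCount X y := by
  rw [tukeyDepth_eq_minDepthCount_div, tukeyDepth_eq_minDepthCount_div,
    div_le_div_iff_of_pos_right (by exact_mod_cast hn), Nat.cast_le]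

theorem medianRegion_eq_setOf_le_minDepthCount (hn : 0 < n) {x₀ : EuclideanSpace ℝ (Fin p)}
    (hx₀ : x₀ ∈ medianRegion X) :
    medianRegion X = {x | minDepthCount X x₀ ≤ minDepthCount X x} := by
  ext x
  rw [Set.mem_ofPred_eq, ← tukeyDepth_le_tukeyDepth_iff X hn, hx₀]
  exact ⟨ge_of_eq, (tukeyDepth_le_maxDepth X x).antisymm⟩

theorem convex_setOf_le_depthCount (u : EuclideanSpace ℝ (Fin p)) (m : ℕ) :
    Convex ℝ {x | m ≤ depthCount X u x} := by
  -- the count depends on `x` only through `⟪u, x⟫`, monotonically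
  have hmono : Monotone fun t : ℝ => Nat.card {i : Fin n // ⟪u, X i⟫ ≤ t} :=
    fun s t hst => Nat.card_mono (Set.toFinite _) fun i hi => le_trans hi hst
  exact (hmono.convex_ge m).linear_preimage (innerₛₗ ℝ u)

theorem upperSemicontinuous_depthCount (u : EuclideanSpace ℝ (Fin p)) :
    UpperSemicontinuous (depthCount X u) := by
  have hsum : depthCount X u =
      fun x => ∑ i, {x | ⟪u, X i⟫ ≤ ⟪u, x⟫}.indicator (1 : EuclideanSpace ℝ (Fin p) → ℕ) x := by
    ext x
    simp [depthCount, Nat.card_eq_fintype_card, Fintype.card_subtype, Set.indicator_apply]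
  rw [hsum]
  exact upperSemicontinuous_sum fun i _ =>
    (isClosed_le continuous_const (continuous_const.inner continuous_id))
      |>.upperSemicontinuous_indicator zero_le_one

theorem setOf_le_minDepthCount_eq_iInter [Nontrivial (EuclideanSpace ℝ (Fin p))] (m : ℕ) :
    {x | m ≤ minDepthCount X x} = ⋂ (u) (_ : u ≠ 0), {x | m ≤ depthCount X u x} := by
  ext x
  simp only [Set.mem_ofPred_eq, Set.mem_iInter, le_minDepthCount_iff]

theorem convex_setOf_le_minDepthCount (m : ℕ) : Convex ℝ {x | m ≤ minDepthCount X x} := by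
  rcases subsingleton_or_nontrivial (EuclideanSpace ℝ (Fin p)) with _ | _
  · exact Set.subsingleton_of_subsingleton.convex
  rw [setOf_le_minDepthCount_eq_iInter]
  exact convex_iInter₂ fun u _ => convex_setOf_le_depthCount X u m

theorem isClosed_setOf_le_minDepthCount (m : ℕ) : IsClosed {x | m ≤ minDepthCount X x} := by
  rcases subsingleton_or_nontrivial (EuclideanSpace ℝ (Fin p)) with _ | _
  · exact Set.subsingleton_of_subsingleton.isClosed
  rw [setOf_le_minDepthCount_eq_iInter]
  exact isClosed_biInter fun u _ => (upperSemicontinuous_depthCount X u).isClosed_preimage m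

theorem depthCount_neg_self_eq_zero {x : EuclideanSpace ℝ (Fin p)} (hx : ∀ i, ‖X i‖ < ‖x‖) :
    depthCount X (-x) x = 0 := by
  rw [depthCount, Nat.card_eq_zero]
  refine Or.inl ⟨fun ⟨i, hi⟩ => ?_⟩
  rw [inner_neg_left, inner_neg_left, neg_le_neg_iff, real_inner_self_eq_norm_mul_norm] at hi
  have hx₀ : 0 < ‖x‖ := (norm_nonneg _).trans_lt (hx i)
  nlinarith [real_inner_le_norm x (X i), hx i]

theorem minDepthCount_eq_zero_of_forall_norm_lt {x : EuclideanSpace ℝ (Fin p)}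
    (hx : ∀ i, ‖X i‖ < ‖x‖) : minDepthCount X x = 0 := by
  rcases n.eq_zero_or_pos with rfl | hn
  · exact Nat.le_zero.mp (minDepthCount_le X x)
  have hx₀ : x ≠ 0 := norm_pos_iff.mp ((norm_nonneg _).trans_lt (hx ⟨0, hn⟩))
  exact Nat.le_zero.mp <| (minDepthCount_le_depthCount X (neg_ne_zero.mpr hx₀) x).trans_eq
    (depthCount_neg_self_eq_zero X hx)

theorem isBounded_setOf_pos_minDepthCount :
    Bornology.IsBounded {x | 0 < minDepthCount X x} := by
  obtain ⟨R, hR⟩ := (Set.finite_range fun i => ‖X i‖).bddAbove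
  refine (Metric.isBounded_closedBall (x := 0) (r := R)).subset fun x hx => ?_
  rw [mem_closedBall_zero_iff]
  by_contra! hxR
  exact hx.ne' (minDepthCount_eq_zero_of_forall_norm_lt X fun i => (hR ⟨i, rfl⟩).trans_lt hxR)

theorem isCompact_setOf_le_minDepthCount {m : ℕ} (hm : 0 < m) :
    IsCompact {x | m ≤ minDepthCount X x} :=
  Metric.isCompact_of_isClosed_isBounded (isClosed_setOf_le_minDepthCount X m)
    ((isBounded_setOf_pos_minDepthCount X).subset fun _ hx => hm.trans_le hx)

theorem one_le_minDepthCount_apply [Nontrivial (EuclideanSpace ℝ (Fin p))] (i : Fin n) :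
    1 ≤ minDepthCount X (X i) :=
  (le_minDepthCount_iff X).mpr fun _ _ => Nat.card_pos_iff.mpr ⟨⟨⟨i, le_rfl⟩⟩, inferInstance⟩

end TukeyDepth

theorem medianRegion_nonempty_convex_compact_general {p n : ℕ} (hn : 1 ≤ n)
    (X : Fin n → EuclideanSpace ℝ (Fin p)) :
    (medianRegion X).Nonempty ∧ Convex ℝ (medianRegion X) ∧ IsCompact (medianRegion X) ∧
    ∃ x : EuclideanSpace ℝ (Fin p), tukeyDepth X x = maxDepth X := by
  obtain ⟨x₀, hx₀⟩ := exists_tukeyDepth_eq_maxDepth X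
  refine ⟨⟨x₀, hx₀⟩, ?_, ?_, x₀, hx₀⟩ <;>
    rw [medianRegion_eq_setOf_le_minDepthCount X hn hx₀]
  · exact convex_setOf_le_minDepthCount X _
  rcases subsingleton_or_nontrivial (EuclideanSpace ℝ (Fin p)) with _ | _
  · exact Set.subsingleton_of_subsingleton.isCompact
  have hdata : tukeyDepth X (X ⟨0, hn⟩) ≤ tukeyDepth X x₀ := hx₀ ▸ tukeyDepth_le_maxDepth X _
  exact isCompact_setOf_le_minDepthCount X <| (one_le_minDepthCount_apply X _).trans
    ((tukeyDepth_le_tukeyDepth_iff X hn).mp hdata)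

/-- The Tukey median region is nonempty, convex and compact; in particular the
supremum defining `λ*` is attained. -/
theorem medianRegion_nonempty_convex_compact {p n : ℕ} (hp : 1 ≤ p) (hn : 1 ≤ n)
    (X : Fin n → EuclideanSpace ℝ (Fin p)) :
    (medianRegion X).Nonempty ∧ Convex ℝ (medianRegion X) ∧ IsCompact (medianRegion X) ∧
    ∃ x : EuclideanSpace ℝ (Fin p), tukeyDepth X x = maxDepth X :=
  medianRegion_nonempty_convex_compact_general hn X
end
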